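/- arXiv:1604.06933 — 2 statements merged into one kernel-verified Lean document; each statement's English description precedes it below -/
import Mathlib

section
/- Let F : ℤ/N → ℝ satisfy the hypotheses of the previous bound (DFT of F supported on {-τ/2,...,τ/2} mod N, τ even). If indices j-1, j satisfy |F_j| + |F_{j-1}| > (2/N)^{3/2} π √(τ(τ+1)(τ+2)/24) ‖F‖, then F_j and F_{j-1} have the same sign, i.e., F_j · F_{j-1} > 0. -/
open Finset Real

/-- The discrete Fourier transform `f(k) = (1/N) ∑_j F(j) e^{2πijk/N}`. -/
noncomputable def dft {N : ℕ} [NeZero N] (F : ZMod N → ℂ) (k : ZMod N) : ℂ :=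
  (N : ℂ)⁻¹ * ∑ j : ZMod N,
    F j * Complex.exp (2 * Real.pi * Complex.I * (j.val : ℂ) * (k.val : ℂ) / N)

/-- Membership in the support set `{-τ/2, ..., τ/2} mod N`. -/
def inSupp (N τ : ℕ) (k : ZMod N) : Prop :=
  ∃ m : ℤ, |m| ≤ (τ : ℤ) / 2 ∧ (m : ZMod N) = k

-- A: |e^{iθ} - 1| ≤ |θ|
lemma exp_I_sub_one_abs_le (θ : ℝ) :
    ‖Complex.exp (θ * Complex.I) - 1‖ ≤ |θ| := by
  have h1 : Complex.exp (θ * Complex.I) - 1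
      = ((Real.cos θ - 1 : ℝ) : ℂ) + (Real.sin θ : ℝ) * Complex.I := by
    rw [Complex.exp_mul_I, ← Complex.ofReal_cos, ← Complex.ofReal_sin]; push_cast; ring
  have h2 : Complex.normSq (Complex.exp (θ * Complex.I) - 1)
      = (Real.cos θ - 1) ^ 2 + Real.sin θ ^ 2 := by
    rw [h1, Complex.normSq_add_mul_I]
  have h4 : Real.cos θ = 2 * Real.cos (θ / 2) ^ 2 - 1 := by
    have h := Real.cos_two_mul (θ / 2)
    rwa [show (2 : ℝ) * (θ / 2) = θ by ring] at h
  have hs : Real.sin (θ / 2) ^ 2 ≤ (θ / 2) ^ 2 := by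
    have h := Real.abs_sin_le_abs (x := θ / 2)
    nlinarith [sq_abs (Real.sin (θ / 2)), sq_abs (θ / 2), abs_nonneg (Real.sin (θ / 2))]
  have hns : Complex.normSq (Complex.exp (θ * Complex.I) - 1) ≤ θ ^ 2 := by
    rw [h2]
    nlinarith [Real.sin_sq_add_cos_sq θ, Real.sin_sq_add_cos_sq (θ / 2)]
  calc ‖Complex.exp (θ * Complex.I) - 1‖
      = Real.sqrt (Complex.normSq (Complex.exp (θ * Complex.I) - 1)) := Complex.norm_def _
    _ ≤ Real.sqrt (θ ^ 2) := Real.sqrt_le_sqrt hns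
    _ = |θ| := Real.sqrt_sq_eq_abs θ

-- B: orthogonality
lemma char_orth {N : ℕ} [NeZero N] (t : ZMod N) :
    ∑ k : ZMod N, ZMod.stdAddChar (t * k) = if t = 0 then (N : ℂ) else 0 := by
  split_ifs with h
  · simp [h]
  · exact AddChar.sum_eq_zero_of_ne_one (ZMod.isPrimitive_stdAddChar N h)

lemma dft_eq {N : ℕ} [NeZero N] (F : ZMod N → ℂ) (k : ZMod N) :
    dft F k = (N : ℂ)⁻¹ * ∑ j : ZMod N, F j * ZMod.stdAddChar (j * k) := by
  unfold dft
  congr 1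
  refine Finset.sum_congr rfl fun j _ => ?_
  congr 1
  have h : j * k = (((j.val * k.val : ℕ) : ℤ) : ZMod N) := by
    push_cast
    rw [ZMod.natCast_val, ZMod.natCast_val, ZMod.cast_id, ZMod.cast_id]
  rw [h, ZMod.stdAddChar_coe]
  congr 1
  push_cast
  ring

lemma conj_stdAddChar {N : ℕ} [NeZero N] (x : ZMod N) :
    (starRingEnd ℂ) (ZMod.stdAddChar x) = ZMod.stdAddChar (-x) := by
  have h : x = ((x.val : ℤ) : ZMod N) := by simp
  rw [h, ← Int.cast_neg, ZMod.stdAddChar_coe, ZMod.stdAddChar_coe, ← Complex.exp_conj]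
  congr 1
  simp only [map_div₀, map_mul, map_ofNat, Complex.conj_I, Complex.conj_ofReal,
    map_intCast, map_natCast]
  push_cast
  ring

lemma inv_formula {N : ℕ} [NeZero N] (F : ZMod N → ℂ) (j : ZMod N) :
    ∑ k : ZMod N, ZMod.stdAddChar (-(j * k)) * dft F k = F j := by
  have hN : (N : ℂ) ≠ 0 := Nat.cast_ne_zero.2 (NeZero.ne N)
  simp_rw [dft_eq, Finset.mul_sum]
  rw [Finset.sum_comm]
  have key : ∀ l k : ZMod N, ZMod.stdAddChar (-(j * k)) * ((N : ℂ)⁻¹ * (F l * ZMod.stdAddChar (l * k)))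
      = (N : ℂ)⁻¹ * (F l * ZMod.stdAddChar ((l - j) * k)) := by
    intro l k
    rw [show (l - j) * k = l * k + -(j * k) by ring, AddChar.map_add_eq_mul]
    ring
  simp_rw [key, ← Finset.mul_sum, char_orth, sub_eq_zero, mul_ite, mul_zero,
    Finset.sum_ite_eq', Finset.mem_univ, if_true]
  field_simp

lemma parseval_aux {N : ℕ} [NeZero N] (F : ZMod N → ℂ) :
    ∑ k : ZMod N, _root_.dft F k * (starRingEnd ℂ) (_root_.dft F k)
      = (N : ℂ)⁻¹ * ∑ l : ZMod N, F l * (starRingEnd ℂ) (F l) := by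
  have hN : (N : ℂ) ≠ 0 := Nat.cast_ne_zero.2 (NeZero.ne N)
  have hconj : ∀ k, (starRingEnd ℂ) (_root_.dft F k)
      = (N : ℂ)⁻¹ * ∑ m : ZMod N, (starRingEnd ℂ) (F m) * ZMod.stdAddChar (-(m * k)) := by
    intro k
    rw [dft_eq, map_mul, map_sum]
    congr 1
    · simp
    refine Finset.sum_congr rfl fun m _ => ?_
    rw [map_mul, conj_stdAddChar]
  have step : ∀ k, _root_.dft F k * (starRingEnd ℂ) (_root_.dft F k)
      = (N : ℂ)⁻¹ * (N : ℂ)⁻¹ *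
        ∑ l : ZMod N, ∑ m : ZMod N,
          F l * (starRingEnd ℂ) (F m) * ZMod.stdAddChar ((l - m) * k) := by
    intro k
    rw [hconj k, dft_eq, mul_mul_mul_comm, Finset.sum_mul_sum]
    congr 1
    refine Finset.sum_congr rfl fun l _ => Finset.sum_congr rfl fun m _ => ?_
    rw [show (l - m) * k = l * k + -(m * k) by ring, AddChar.map_add_eq_mul]
    ring
  simp_rw [step, ← Finset.mul_sum]
  rw [Finset.sum_comm]
  have inner : ∀ l : ZMod N,
      ∑ k : ZMod N, ∑ m : ZMod N, F l * (starRingEnd ℂ) (F m) * ZMod.stdAddChar ((l - m) * k)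
      = ∑ m : ZMod N, F l * (starRingEnd ℂ) (F m) * (if l - m = 0 then (N : ℂ) else 0) := by
    intro l
    rw [Finset.sum_comm]
    refine Finset.sum_congr rfl fun m _ => ?_
    rw [← Finset.mul_sum, char_orth]
  simp_rw [inner, sub_eq_zero, mul_ite, mul_zero, Finset.sum_ite_eq, Finset.mem_univ, if_true]
  rw [← Finset.sum_mul]
  field_simp

lemma parseval {N : ℕ} [NeZero N] (F : ZMod N → ℝ) :
    ∑ k : ZMod N, ‖_root_.dft (fun j => (F j : ℂ)) k‖ ^ 2
      = (N : ℝ)⁻¹ * ∑ i : ZMod N, F i ^ 2 := by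
  have h := parseval_aux (N := N) (fun j => (F j : ℂ))
  simp_rw [Complex.mul_conj] at h
  simp_rw [Complex.sq_norm]
  have h2 : ((∑ k : ZMod N, Complex.normSq (_root_.dft (fun j => (F j : ℂ)) k) : ℝ) : ℂ)
      = (((N : ℝ)⁻¹ * ∑ i : ZMod N, F i ^ 2 : ℝ) : ℂ) := by
    push_cast
    simpa [Complex.normSq_ofReal, sq] using h
  exact_mod_cast h2

lemma sum_sq_Icc (t : ℕ) :
    ∑ m ∈ Finset.Icc (-(t : ℤ)) (t : ℤ), ((m : ℝ)) ^ 2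
      = (t : ℝ) * (t + 1) * (2 * t + 1) / 3 := by
  induction t with
  | zero => simp
  | succ t ih =>
    have hcast : ((t + 1 : ℕ) : ℤ) = (t : ℤ) + 1 := by push_cast; ring
    have h1 : ((t : ℤ) + 1) ∉ Finset.Icc (-(t : ℤ)) (t : ℤ) := by
      simp [Finset.mem_Icc]
    have h2 : -((t : ℤ) + 1) ∉ insert ((t : ℤ) + 1) (Finset.Icc (-(t : ℤ)) (t : ℤ)) := by
      simp only [Finset.mem_insert, Finset.mem_Icc]
      omega
    have hset : Finset.Icc (-((t : ℤ) + 1)) ((t : ℤ) + 1)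
        = insert (-((t : ℤ) + 1)) (insert ((t : ℤ) + 1) (Finset.Icc (-(t : ℤ)) (t : ℤ))) := by
      ext x
      simp only [Finset.mem_Icc, Finset.mem_insert]
      omega
    rw [hcast, hset, Finset.sum_insert h2, Finset.sum_insert h1, ih]
    push_cast
    ring

lemma sum_image_le' {α β : Type*} [DecidableEq β] (s : Finset α) (f : α → β) (g : β → ℝ)
    (hg : ∀ b, 0 ≤ g b) : ∑ b ∈ s.image f, g b ≤ ∑ a ∈ s, g (f a) := by
  classical
  induction s using Finset.induction_on with
  | empty => simp
  | @insert a s' h ih =>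
    rw [Finset.image_insert, Finset.sum_insert h]
    by_cases hb : f a ∈ s'.image f
    · rw [Finset.insert_eq_self.2 hb]
      linarith [hg (f a)]
    · rw [Finset.sum_insert hb]
      linarith

lemma abs_char {N : ℕ} [NeZero N] (x : ZMod N) : ‖ZMod.stdAddChar x‖ = 1 := by
  rw [ZMod.stdAddChar_apply]
  exact Circle.norm_coe (ZMod.toCircle x)

set_option maxHeartbeats 2000000 in
lemma lipschitz_bound (N τ : ℕ) [NeZero N] (hτ : Even τ) (F : ZMod N → ℝ)
    (hF : ∀ k : ZMod N, ¬ inSupp N τ k → _root_.dft (fun j => (F j : ℂ)) k = 0) (j : ZMod N) :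
    |F j - F (j - 1)| ≤ (2 / N : ℝ) ^ ((3 : ℝ) / 2) * π *
        Real.sqrt ((τ * (τ + 1) * (τ + 2) : ℝ) / 24) * Real.sqrt (∑ i : ZMod N, F i ^ 2) := by
  classical
  have hN : (N : ℝ) ≠ 0 := Nat.cast_ne_zero.2 (NeZero.ne N)
  obtain ⟨t, ht⟩ := hτ
  have hτ2 : τ = 2 * t := by omega
  set f : ZMod N → ℂ := fun i => (F i : ℂ) with hf
  set g := _root_.dft f with hgdef
  set S : Finset (ZMod N) :=
    (Finset.Icc (-(t : ℤ)) (t : ℤ)).image (fun m : ℤ => (m : ZMod N)) with hSdef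
  have hg0 : ∀ k, k ∉ S → g k = 0 := by
    intro k hk
    apply hF
    rintro ⟨m, hm, rfl⟩
    apply hk
    refine Finset.mem_image.2 ⟨m, ?_, rfl⟩
    rw [Finset.mem_Icc]
    rw [abs_le] at hm
    omega
  have hinv : ∀ i : ZMod N, (F i : ℂ) = ∑ k ∈ S, ZMod.stdAddChar (-(i * k)) * g k := by
    intro i
    rw [show ((F i : ℝ) : ℂ) = f i from rfl, ← inv_formula f i]
    exact (Finset.sum_subset (Finset.subset_univ S)
      (fun k _ hk => mul_eq_zero_of_right _ (hg0 k hk))).symm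
  have hdiff : ((F j - F (j - 1) : ℝ) : ℂ)
      = ∑ k ∈ S, ZMod.stdAddChar (-(j * k)) * (1 - ZMod.stdAddChar k) * g k := by
    push_cast
    rw [hinv j, hinv (j - 1), ← Finset.sum_sub_distrib]
    refine Finset.sum_congr rfl fun k _ => ?_
    rw [show -((j - 1) * k) = -(j * k) + k by ring, AddChar.map_add_eq_mul]
    ring
  have habs1 : |F j - F (j - 1)|
      ≤ ∑ k ∈ S, ‖1 - ZMod.stdAddChar k‖ * ‖g k‖ := by
    calc |F j - F (j - 1)| = ‖((F j - F (j - 1) : ℝ) : ℂ)‖ :=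
          by rw [Complex.norm_real, Real.norm_eq_abs]
      _ = ‖∑ k ∈ S, ZMod.stdAddChar (-(j * k)) * (1 - ZMod.stdAddChar k) * g k‖ := by
          rw [hdiff]
      _ ≤ ∑ k ∈ S, ‖ZMod.stdAddChar (-(j * k)) * (1 - ZMod.stdAddChar k) * g k‖ :=
          norm_sum_le _ _
      _ = ∑ k ∈ S, ‖1 - ZMod.stdAddChar k‖ * ‖g k‖ := by
          refine Finset.sum_congr rfl fun k _ => ?_
          rw [norm_mul, norm_mul, abs_char, one_mul]
  have hCS := Finset.sum_mul_sq_le_sq_mul_sq S (fun k => ‖1 - ZMod.stdAddChar k‖)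
    (fun k => ‖g k‖)
  have hA : ∑ k ∈ S, ‖1 - ZMod.stdAddChar k‖ ^ 2
      ≤ (2 * π / N) ^ 2 * ((t : ℝ) * (t + 1) * (2 * t + 1) / 3) := by
    have h1 : ∑ k ∈ S, ‖1 - ZMod.stdAddChar k‖ ^ 2
        ≤ ∑ m ∈ Finset.Icc (-(t : ℤ)) (t : ℤ),
            ‖1 - ZMod.stdAddChar ((m : ZMod N))‖ ^ 2 :=
      sum_image_le' _ _ _ (fun b => sq_nonneg _)
    have h2 : ∀ m : ℤ, ‖1 - ZMod.stdAddChar ((m : ZMod N))‖ ^ 2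
        ≤ (2 * π / N) ^ 2 * (m : ℝ) ^ 2 := by
      intro m
      have he : ZMod.stdAddChar ((m : ZMod N))
          = Complex.exp (((2 * π * m / N : ℝ)) * Complex.I) := by
        rw [ZMod.stdAddChar_coe]
        congr 1
        push_cast
        ring
      have hb := exp_I_sub_one_abs_le (2 * π * m / N)
      rw [← he] at hb
      have habs : ‖1 - ZMod.stdAddChar ((m : ZMod N))‖
          = ‖ZMod.stdAddChar ((m : ZMod N)) - 1‖ :=
        norm_sub_rev 1 _
      calc ‖1 - ZMod.stdAddChar ((m : ZMod N))‖ ^ 2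
          ≤ |2 * π * m / N| ^ 2 := by
            rw [habs]
            exact pow_le_pow_left₀ (norm_nonneg _) hb 2
        _ = (2 * π / N) ^ 2 * (m : ℝ) ^ 2 := by
            rw [sq_abs]
            field_simp
    calc ∑ k ∈ S, ‖1 - ZMod.stdAddChar k‖ ^ 2
        ≤ ∑ m ∈ Finset.Icc (-(t : ℤ)) (t : ℤ),
            ‖1 - ZMod.stdAddChar ((m : ZMod N))‖ ^ 2 := h1
      _ ≤ ∑ m ∈ Finset.Icc (-(t : ℤ)) (t : ℤ), (2 * π / N) ^ 2 * (m : ℝ) ^ 2 :=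
          Finset.sum_le_sum (fun m _ => h2 m)
      _ = (2 * π / N) ^ 2 * ((t : ℝ) * (t + 1) * (2 * t + 1) / 3) := by
          rw [← Finset.mul_sum, sum_sq_Icc]
  have hB : ∑ k ∈ S, ‖g k‖ ^ 2 ≤ (N : ℝ)⁻¹ * ∑ i : ZMod N, F i ^ 2 := by
    rw [← parseval F]
    exact Finset.sum_le_sum_of_subset_of_nonneg (Finset.subset_univ S)
      (fun k _ _ => sq_nonneg _)
  -- combine
  set R := (2 / N : ℝ) ^ ((3 : ℝ) / 2) * π *
      Real.sqrt ((τ * (τ + 1) * (τ + 2) : ℝ) / 24) * Real.sqrt (∑ i : ZMod N, F i ^ 2) with hR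
  have hRnn : 0 ≤ R := by positivity
  have hrpow : ((2 / N : ℝ) ^ ((3 : ℝ) / 2)) ^ 2 = (2 / N : ℝ) ^ (3 : ℕ) := by
    rw [← Real.rpow_natCast ((2 / N : ℝ) ^ ((3 : ℝ) / 2)) 2, ← Real.rpow_mul (by positivity)]
    norm_num
  have hRsq : R ^ 2 = (2 * π / N) ^ 2 * ((t : ℝ) * (t + 1) * (2 * t + 1) / 3) *
      ((N : ℝ)⁻¹ * ∑ i : ZMod N, F i ^ 2) := by
    have hτR : (τ : ℝ) = 2 * t := by rw [hτ2]; push_cast; ring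
    rw [hR, mul_pow, mul_pow, mul_pow, hrpow,
      Real.sq_sqrt (by positivity : (0:ℝ) ≤ (τ * (τ + 1) * (τ + 2) : ℝ) / 24),
      Real.sq_sqrt (by positivity : (0:ℝ) ≤ ∑ i : ZMod N, F i ^ 2), hτR]
    field_simp
    ring
  have hsum_nn : 0 ≤ ∑ k ∈ S, ‖1 - ZMod.stdAddChar k‖ * ‖g k‖ :=
    Finset.sum_nonneg (fun k _ => mul_nonneg (norm_nonneg _) (norm_nonneg _))
  have hDsq : |F j - F (j - 1)| ^ 2 ≤ R ^ 2 := by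
    have hAnn : 0 ≤ ∑ k ∈ S, ‖1 - ZMod.stdAddChar k‖ ^ 2 :=
      Finset.sum_nonneg (fun k _ => sq_nonneg _)
    have hBnn : 0 ≤ ∑ k ∈ S, ‖g k‖ ^ 2 :=
      Finset.sum_nonneg (fun k _ => sq_nonneg _)
    calc |F j - F (j - 1)| ^ 2
        ≤ (∑ k ∈ S, ‖1 - ZMod.stdAddChar k‖ * ‖g k‖) ^ 2 :=
          pow_le_pow_left₀ (abs_nonneg _) habs1 2
      _ ≤ (∑ k ∈ S, ‖1 - ZMod.stdAddChar k‖ ^ 2) *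
            (∑ k ∈ S, ‖g k‖ ^ 2) := hCS
      _ ≤ ((2 * π / N) ^ 2 * ((t : ℝ) * (t + 1) * (2 * t + 1) / 3)) *
            ((N : ℝ)⁻¹ * ∑ i : ZMod N, F i ^ 2) := by
          apply mul_le_mul hA hB hBnn (by positivity)
      _ = R ^ 2 := hRsq.symm
  nlinarith [abs_nonneg (F j - F (j - 1)), hRnn]

theorem same_sign_above_threshold (N τ : ℕ) [NeZero N] (hτ : Even τ)
    (F : ZMod N → ℝ)
    (hF : ∀ k : ZMod N, ¬ inSupp N τ k → dft (fun j => (F j : ℂ)) k = 0)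
    (j : ZMod N)
    (hthr : |F j| + |F (j - 1)| >
      (2 / N : ℝ) ^ ((3 : ℝ) / 2) * π *
        Real.sqrt ((τ * (τ + 1) * (τ + 2) : ℝ) / 24) *
        Real.sqrt (∑ i : ZMod N, F i ^ 2)) :
    F j * F (j - 1) > 0 := by
  by_contra h
  push_neg at h
  have hb := lipschitz_bound N τ hτ F hF j
  have hkey : |F j| + |F (j - 1)| ≤ |F j - F (j - 1)| := by
    rcases mul_nonpos_iff.mp h with ⟨h1, h2⟩ | ⟨h1, h2⟩
    · rw [abs_of_nonneg h1, abs_of_nonpos h2, abs_of_nonneg (by linarith)]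
      ring_nf
      linarith
    · rw [abs_of_nonpos h1, abs_of_nonneg h2, abs_of_nonpos (by linarith)]
      ring_nf
      linarith
  linarith
end

section
/- Let N > 2τ + M, and let F : ℤ/N → ℝ with DFT supported on {-τ/2,...,τ/2} mod N (τ even), with sign pattern s = sign(F) constant on each of M given contiguous segments partitioning {0,...,N-1}, and with F nonvanishing at the first and last index of each segment. If X : ℤ/N → ℂ satisfies (i) DFT(|F|·X)(k) = 0 for all k mod N outside {-τ/2,...,τ/2} mod N and (ii) X(j) = X(j+1) whenever j and j+1 lie in the same segment, then X = c·s for some constant c ∈ ℂ. -/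
open Finset

noncomputable def zet (N : ℕ) : ℂ := Complex.exp (2 * Real.pi * Complex.I / N)

lemma zet_ne_zero (N : ℕ) : zet N ≠ 0 := Complex.exp_ne_zero _

lemma zet_prim (N : ℕ) [NeZero N] : IsPrimitiveRoot (zet N) N :=
  Complex.isPrimitiveRoot_exp N (NeZero.ne N)

lemma zet_zpow_one_iff (N : ℕ) [NeZero N] (d : ℤ) : zet N ^ d = 1 ↔ (N : ℤ) ∣ d :=
  (zet_prim N).zpow_eq_one_iff_dvd d

lemma zet_pow_N (N : ℕ) [NeZero N] : zet N ^ (N : ℤ) = 1 :=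
  (zet_zpow_one_iff N N).mpr dvd_rfl

lemma zet_zpow_congr (N : ℕ) [NeZero N] {a b : ℤ} (h : (N : ℤ) ∣ (a - b)) :
    zet N ^ a = zet N ^ b := by
  have ha : a = b + (a - b) := by ring
  obtain ⟨t, ht⟩ := h
  rw [ha, ht, zpow_add₀ (zet_ne_zero N), zpow_mul, zet_pow_N, one_zpow, mul_one]

lemma orth (N : ℕ) [NeZero N] (d : ℤ) :
    ∑ i ∈ range N, zet N ^ (d * i) = if (N : ℤ) ∣ d then (N : ℂ) else 0 := by
  have hterm : ∀ i : ℕ, zet N ^ (d * i) = (zet N ^ d) ^ i := by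
    intro i; rw [zpow_mul, zpow_natCast]
  by_cases h : (N : ℤ) ∣ d
  · simp only [if_pos h]
    rw [Finset.sum_congr rfl (fun i _ => by rw [hterm, (zet_zpow_one_iff N d).mpr h, one_pow])]
    simp
  · simp only [if_neg h]
    have hne : zet N ^ d ≠ 1 := fun hc => h ((zet_zpow_one_iff N d).mp hc)
    rw [Finset.sum_congr rfl (fun i _ => hterm i), geom_sum_eq hne]
    have hc : (zet N ^ d) ^ N = 1 := by
      rw [← zpow_natCast, ← zpow_mul, mul_comm, zpow_mul, zet_pow_N, one_zpow]
    rw [hc]; simp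

lemma sum_zmod_val {N : ℕ} [NeZero N] (g : ℕ → ℂ) :
    ∑ k : ZMod N, g (k.val) = ∑ i ∈ range N, g i := by
  refine Finset.sum_nbij' (fun k => k.val) (fun i => (i : ZMod N)) ?_ ?_ ?_ ?_ ?_
  · intro a _; exact mem_range.mpr (ZMod.val_lt a)
  · intro a _; exact mem_univ _
  · intro a _; exact ZMod.natCast_rightInverse a
  · intro a ha; exact ZMod.val_cast_of_lt (mem_range.mp ha)
  · intro a _; rfl

lemma zet_pow_nat (N : ℕ) [NeZero N] (n : ℕ) :
    zet N ^ (n : ℤ) = Complex.exp (2 * Real.pi * Complex.I * n / N) := by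
  rw [zpow_natCast, zet, ← Complex.exp_nat_mul]
  ring_nf

lemma dft_expand {N : ℕ} [NeZero N] (F : ZMod N → ℂ) (k : ZMod N) :
    dft F k = (N : ℂ)⁻¹ * ∑ j : ZMod N, F j * zet N ^ ((j.val * k.val : ℕ) : ℤ) := by
  unfold dft
  congr 1
  refine Finset.sum_congr rfl (fun j _ => ?_)
  rw [zet_pow_nat]
  push_cast
  ring_nf

lemma inversion {N : ℕ} [NeZero N] (F : ZMod N → ℂ) (j : ZMod N) :
    ∑ k : ZMod N, dft F k * zet N ^ (-((j.val : ℤ) * (k.val : ℤ))) = F j := by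
  have hNne : (N : ℂ) ≠ 0 := Nat.cast_ne_zero.mpr (NeZero.ne N)
  have step1 : ∀ k : ZMod N, dft F k * zet N ^ (-((j.val : ℤ) * (k.val : ℤ)))
      = ∑ j' : ZMod N, ((N : ℂ)⁻¹ * F j') * zet N ^ (((j'.val : ℤ) - (j.val : ℤ)) * (k.val : ℤ)) := by
    intro k
    rw [dft_expand, Finset.mul_sum, Finset.sum_mul]
    refine Finset.sum_congr rfl (fun j' _ => ?_)
    have he : ((j'.val * k.val : ℕ) : ℤ) + (-((j.val : ℤ) * (k.val : ℤ)))
        = ((j'.val : ℤ) - (j.val : ℤ)) * (k.val : ℤ) := by push_cast; ring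
    rw [← he, zpow_add₀ (zet_ne_zero N)]
    ring
  rw [Finset.sum_congr rfl (fun k _ => step1 k), Finset.sum_comm]
  have step2 : ∀ j' : ZMod N,
      ∑ k : ZMod N, ((N : ℂ)⁻¹ * F j') * zet N ^ (((j'.val : ℤ) - (j.val : ℤ)) * (k.val : ℤ))
      = ((N : ℂ)⁻¹ * F j') * (if ((N:ℤ) ∣ ((j'.val : ℤ) - (j.val : ℤ))) then (N : ℂ) else 0) := by
    intro j'
    rw [← Finset.mul_sum]
    congr 1
    rw [sum_zmod_val (fun i => zet N ^ (((j'.val : ℤ) - (j.val : ℤ)) * (i : ℤ)))]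
    exact orth N _
  rw [Finset.sum_congr rfl (fun j' _ => step2 j')]
  rw [Finset.sum_eq_single j]
  · rw [if_pos (by simp)]
    field_simp
  · intro j' _ hne
    rw [if_neg, mul_zero]
    intro hdvd
    have h1 : ((j'.val : ℤ) - (j.val : ℤ)) = 0 := by
      by_contra hd0
      have h2 := Int.le_of_dvd (abs_pos.mpr hd0) ((dvd_abs _ _).mpr hdvd)
      have := ZMod.val_lt j'
      have := ZMod.val_lt j
      rcases abs_cases ((j'.val : ℤ) - (j.val : ℤ)) with ⟨h4, h5⟩ | ⟨h4, h5⟩ <;> omega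
    have h3 : j'.val = j.val := by omega
    exact hne (ZMod.val_injective N h3)
  · intro h; exact absurd (mem_univ j) h

lemma natCast_dvd_sub_of_zmod_eq {N : ℕ} [NeZero N] {a b : ℤ}
    (h : (a : ZMod N) = (b : ZMod N)) : (N : ℤ) ∣ (a - b) := by
  rwa [← ZMod.intCast_zmod_eq_zero_iff_dvd, Int.cast_sub, sub_eq_zero]

lemma int_eq_of_dvd_of_lt {N : ℕ} {d : ℤ} (h : (N : ℤ) ∣ d) (h2 : |d| < N) : d = 0 := by
  by_contra hd0
  have := Int.le_of_dvd (abs_pos.mpr hd0) ((dvd_abs _ _).mpr h)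
  omega

open Polynomial in
lemma repr_lemma {N : ℕ} [NeZero N] (τ : ℕ) (hτN : τ < N) (F : ZMod N → ℂ)
    (hsupp : ∀ k : ZMod N, ¬ inSupp N τ k → dft F k = 0) :
    ∃ P : Polynomial ℂ, P.natDegree ≤ τ ∧
      ∀ n : ℕ, F ((n : ZMod N)) =
        zet N ^ (((τ / 2 : ℕ) : ℤ) * n) * P.eval (zet N ^ (-(n : ℤ))) := by
  set σ : ℕ := τ / 2 with hσdef
  have hσ2 : 2 * σ ≤ τ := by omega
  have hσint : (σ : ℤ) = (τ : ℤ) / 2 := by omega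
  set g : ℕ → ZMod N := fun l => (((l : ℤ) - σ : ℤ) : ZMod N) with hg
  set P : Polynomial ℂ := ∑ l ∈ range (2 * σ + 1), C (dft F (g l)) * X ^ l with hP
  have keyP : ∀ n : ℕ, P.eval (zet N ^ (-(n : ℤ)))
      = ∑ l ∈ range (2 * σ + 1), dft F (g l) * zet N ^ (-(n : ℤ) * (l : ℤ)) := by
    intro n
    rw [hP, Polynomial.eval_finset_sum]
    refine Finset.sum_congr rfl (fun l _ => ?_)
    rw [Polynomial.eval_mul, Polynomial.eval_C, Polynomial.eval_pow, Polynomial.eval_X,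
      ← zpow_natCast (zet N ^ (-(n:ℤ))), ← zpow_mul]
  refine ⟨P, ?_, ?_⟩
  · apply Polynomial.natDegree_sum_le_of_forall_le
    intro l hl
    calc (C (dft F (g l)) * X ^ l).natDegree ≤ (X ^ l : Polynomial ℂ).natDegree :=
          natDegree_C_mul_le _ _
      _ = l := natDegree_X_pow l
      _ ≤ τ := by have := mem_range.mp hl; omega
  · intro n
    set j : ZMod N := (n : ZMod N) with hj
    have hjcong : (N : ℤ) ∣ ((j.val : ℤ) - (n : ℤ)) := by
      apply natCast_dvd_sub_of_zmod_eq
      push_cast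
      rw [ZMod.natCast_rightInverse j]
    have main : F j = ∑ l ∈ range (2 * σ + 1),
        dft F (g l) * zet N ^ (-((j.val : ℤ)) * ((l : ℤ) - σ)) := by
      rw [← inversion F j]
      have himg : ∀ k : ZMod N, dft F k * zet N ^ (-((j.val : ℤ) * (k.val : ℤ))) ≠ 0 →
          k ∈ (range (2 * σ + 1)).image g := by
        intro k hk
        have hdft : dft F k ≠ 0 := fun h => hk (by rw [h, zero_mul])
        have hins : inSupp N τ k := by
          by_contra hcon; exact hdft (hsupp k hcon)
        obtain ⟨m, hm1, hm2⟩ := hins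
        rw [← hσint] at hm1
        refine mem_image.mpr ⟨(m + σ).toNat, mem_range.mpr ?_, ?_⟩
        · rcases abs_cases m with ⟨h4, h5⟩ | ⟨h4, h5⟩ <;> omega
        · rw [hg]
          have htn : (((m + σ).toNat : ℤ)) = m + σ := by
            rcases abs_cases m with ⟨h4, h5⟩ | ⟨h4, h5⟩ <;> omega
          simp only [htn]
          rw [show m + (σ:ℤ) - σ = m by ring, hm2]
      rw [← Finset.sum_subset (Finset.subset_univ ((range (2 * σ + 1)).image g))
        (fun k _ hk => by by_contra hc; exact hk (himg k hc))]
      rw [Finset.sum_image ?inj]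
      case inj =>
        intro l hl l' hl' hgl
        have hd := natCast_dvd_sub_of_zmod_eq (N := N) (a := (l : ℤ) - σ) (b := (l' : ℤ) - σ) hgl
        rw [show ((l : ℤ) - σ) - ((l' : ℤ) - σ) = (l : ℤ) - l' by ring] at hd
        have hl1 := mem_range.mp hl
        have hl2 := mem_range.mp hl'
        have := int_eq_of_dvd_of_lt hd (by
          rcases abs_cases ((l:ℤ) - l') with ⟨h4, h5⟩ | ⟨h4, h5⟩ <;> omega)
        omega
      refine Finset.sum_congr rfl (fun l hl => ?_)
      have hvl : (N : ℤ) ∣ (((g l).val : ℤ) - ((l : ℤ) - σ)) := by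
        apply natCast_dvd_sub_of_zmod_eq
        push_cast
        rw [ZMod.natCast_rightInverse (g l), hg]
        push_cast
        ring
      have hdd : (N : ℤ) ∣ (-((j.val : ℤ) * ((g l).val : ℤ)) - (-((j.val : ℤ)) * ((l : ℤ) - σ))) := by
        rw [show -((j.val : ℤ) * ((g l).val : ℤ)) - (-((j.val : ℤ)) * ((l : ℤ) - σ))
          = (-(j.val : ℤ)) * ((((g l).val : ℤ)) - ((l : ℤ) - σ)) by ring]
        exact Dvd.dvd.mul_left hvl _
      rw [zet_zpow_congr N hdd]
    rw [main, keyP, Finset.mul_sum]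
    refine Finset.sum_congr rfl (fun l hl => ?_)
    have hdd2 : (N : ℤ) ∣ (-((j.val : ℤ)) * ((l : ℤ) - σ) - ((σ:ℤ) * n + -(n : ℤ) * l)) := by
      rw [show -((j.val : ℤ)) * ((l : ℤ) - σ) - ((σ:ℤ) * n + -(n : ℤ) * l)
        = ((j.val : ℤ) - n) * ((σ:ℤ) - l) by ring]
      exact hjcong.mul_right _
    rw [zet_zpow_congr N hdd2, zpow_add₀ (zet_ne_zero N)]
    ring

lemma find_seg (M : ℕ) (e : ℕ → ℕ) (he0 : e 0 = 0) (heM : ∀ m, m < M → True)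
    (hmono : ∀ m < M, e m < e (m + 1)) {n : ℕ} (hMpos : 0 < M) (hn : n < e M) :
    ∃ m, m < M ∧ e m ≤ n ∧ n < e (m + 1) := by
  classical
  set P : ℕ → Prop := fun m => e m ≤ n with hPdef
  have hP0 : P 0 := by rw [hPdef]; simp [he0]
  set m : ℕ := Nat.findGreatest P M with hm
  have hPm : P m := Nat.findGreatest_spec (Nat.zero_le M) hP0
  have hmle : m ≤ M := Nat.findGreatest_le M
  have hmM : m < M := by
    rcases Nat.lt_or_ge m M with h | h
    · exact h
    · exfalso
      have : m = M := le_antisymm hmle h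
      rw [this] at hPm
      exact absurd hPm (by rw [hPdef]; simp; omega)
  refine ⟨m, hmM, hPm, ?_⟩
  have := Nat.findGreatest_is_greatest (P := P) (n := M) (k := m + 1) (by omega) (by omega)
  rw [hPdef] at this
  simpa using Nat.lt_of_not_le this

theorem sign_retrieval_linear_system (N τ M : ℕ) [NeZero N]
    (hτ : Even τ) (hM : 0 < M) (hN : 2 * τ + M < N)
    (F : ZMod N → ℝ)
    (hFsupp : ∀ k : ZMod N, ¬ inSupp N τ k → dft (fun j => (F j : ℂ)) k = 0)
    -- the segment endpoints: segment m is {e m, ..., e (m+1) - 1}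
    (e : ℕ → ℕ) (he0 : e 0 = 0) (heM : e M = N)
    (hmono : ∀ m < M, e m < e (m + 1))
    -- the sign of F is constant on every segment
    (hsign : ∀ m < M, ∀ j j' : ℕ, e m ≤ j → j < e (m + 1) → e m ≤ j' → j' < e (m + 1) →
      Real.sign (F (j : ZMod N)) = Real.sign (F (j' : ZMod N)))
    -- F does not vanish at the first and last index of each segment
    (hnz : ∀ m < M, F ((e m : ℕ) : ZMod N) ≠ 0 ∧ F ((e (m + 1) - 1 : ℕ) : ZMod N) ≠ 0)
    (X : ZMod N → ℂ)
    -- (i) the compact-support equations for |F|·X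
    (hX1 : ∀ k : ZMod N, ¬ inSupp N τ k → dft (fun j => ((|F j| : ℝ) : ℂ) * X j) k = 0)
    -- (ii) X is constant on every segment
    (hX2 : ∀ m < M, ∀ j : ℕ, e m ≤ j → j + 1 < e (m + 1) →
      X (j : ZMod N) = X ((j + 1 : ℕ) : ZMod N)) :
    ∃ c : ℂ, ∀ j : ZMod N, X j = c * (Real.sign (F j) : ℂ) := by
  classical
  have hτN : τ < N := by omega
  -- segment lookup
  have seg : ∀ n, n < N → ∃ m, m < M ∧ e m ≤ n ∧ n < e (m + 1) := by
    intro n hn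
    exact find_seg M e he0 (fun _ _ => trivial) hmono hM (heM ▸ hn)
  -- F never vanishes
  have hFne : ∀ j : ZMod N, F j ≠ 0 := by
    intro j hFj
    obtain ⟨m, hm, h1, h2⟩ := seg j.val (ZMod.val_lt j)
    have hs := hsign m hm j.val (e m) h1 h2 (le_refl _) (hmono m hm)
    rw [ZMod.natCast_rightInverse j, hFj, Real.sign_zero] at hs
    exact (hnz m hm).1 (Real.sign_eq_zero_iff.mp hs.symm)
  have hsq : ∀ j : ZMod N, Real.sign (F j) * Real.sign (F j) = 1 := by
    intro j
    rcases Real.sign_apply_eq_of_ne_zero (F j) (hFne j) with h | h <;> rw [h] <;> norm_num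
  have habs : ∀ j : ZMod N, |F j| = Real.sign (F j) * F j := by
    intro j
    rcases lt_trichotomy (F j) 0 with h | h | h
    · rw [Real.sign_of_neg h, abs_of_neg h]; ring
    · exact absurd h (hFne j)
    · rw [Real.sign_of_pos h, abs_of_pos h]; ring
  -- the sign-corrected unknown
  set Y : ℕ → ℂ := fun n => ((Real.sign (F ((n : ℕ) : ZMod N)) : ℝ) : ℂ) * X ((n : ℕ) : ZMod N)
    with hYdef
  have hGY : ∀ n : ℕ, ((|F ((n : ℕ) : ZMod N)| : ℝ) : ℂ) * X ((n : ℕ) : ZMod N)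
      = ((F ((n : ℕ) : ZMod N) : ℝ) : ℂ) * Y n := by
    intro n
    rw [hYdef, habs]
    push_cast
    ring
  -- polynomial representations
  set σ : ℕ := τ / 2 with hσdef
  obtain ⟨P, hPdeg, hPrep⟩ := repr_lemma τ hτN (fun j => ((F j : ℝ) : ℂ)) hFsupp
  obtain ⟨Q, hQdeg, hQrep⟩ := repr_lemma τ hτN (fun j => ((|F j| : ℝ) : ℂ) * X j) hX1
  have hp : ∀ n : ℕ, ((F ((n : ℕ) : ZMod N) : ℝ) : ℂ)
      = zet N ^ ((σ : ℤ) * n) * P.eval (zet N ^ (-(n : ℤ))) := fun n => hPrep n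
  have hq : ∀ n : ℕ, ((|F ((n : ℕ) : ZMod N)| : ℝ) : ℂ) * X ((n : ℕ) : ZMod N)
      = zet N ^ ((σ : ℤ) * n) * Q.eval (zet N ^ (-(n : ℤ))) := fun n => hQrep n
  -- the Wronskian-type polynomial
  set ω : ℂ := zet N ^ (-1 : ℤ) with hωdef
  have hωne : ω ≠ 0 := zpow_ne_zero _ (zet_ne_zero N)
  set h2 : Polynomial ℂ :=
    Q.comp (Polynomial.C ω * Polynomial.X) * P - Q * (P.comp (Polynomial.C ω * Polynomial.X))
    with hh2
  have hzsucc : ∀ n : ℕ, ω * zet N ^ (-(n : ℤ)) = zet N ^ (-((n + 1 : ℕ) : ℤ)) := by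
    intro n
    rw [hωdef, ← zpow_add₀ (zet_ne_zero N)]
    congr 1
    push_cast
    ring
  have hcomp : ∀ (R : Polynomial ℂ) (n : ℕ),
      (R.comp (Polynomial.C ω * Polynomial.X)).eval (zet N ^ (-(n : ℤ)))
      = R.eval (zet N ^ (-((n + 1 : ℕ) : ℤ))) := by
    intro R n
    rw [Polynomial.eval_comp, Polynomial.eval_mul, Polynomial.eval_C, Polynomial.eval_X, hzsucc]
  have he1 : ∀ n : ℕ, h2.eval (zet N ^ (-(n : ℤ)))
      = Q.eval (zet N ^ (-((n + 1 : ℕ) : ℤ))) * P.eval (zet N ^ (-(n : ℤ)))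
        - Q.eval (zet N ^ (-(n : ℤ))) * P.eval (zet N ^ (-((n + 1 : ℕ) : ℤ))) := by
    intro n
    rw [hh2, Polynomial.eval_sub, Polynomial.eval_mul, Polynomial.eval_mul, hcomp, hcomp]
  have hzC : ∀ n : ℕ, zet N ^ ((σ : ℤ) * n) * zet N ^ ((σ : ℤ) * ((n + 1 : ℕ) : ℤ))
      = zet N ^ ((σ : ℤ) * (2 * n + 1)) := by
    intro n
    rw [← zpow_add₀ (zet_ne_zero N)]
    congr 1
    push_cast
    ring
  -- the key evaluation
  have heval : ∀ n : ℕ, zet N ^ ((σ : ℤ) * (2 * n + 1)) * h2.eval (zet N ^ (-(n : ℤ)))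
      = ((F ((n : ℕ) : ZMod N) : ℝ) : ℂ) * ((F ((n + 1 : ℕ) : ZMod N) : ℝ) : ℂ)
        * (Y (n + 1) - Y n) := by
    intro n
    calc zet N ^ ((σ : ℤ) * (2 * n + 1)) * h2.eval (zet N ^ (-(n : ℤ)))
        = ((F ((n : ℕ) : ZMod N) : ℝ) : ℂ)
            * (((|F ((n + 1 : ℕ) : ZMod N)| : ℝ) : ℂ) * X ((n + 1 : ℕ) : ZMod N))
          - (((|F ((n : ℕ) : ZMod N)| : ℝ) : ℂ) * X ((n : ℕ) : ZMod N))
            * ((F ((n + 1 : ℕ) : ZMod N) : ℝ) : ℂ) := by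
          rw [he1, hp n, hp (n + 1), hq n, hq (n + 1), ← hzC]
          ring
      _ = _ := by
          rw [hGY n, hGY (n + 1), hp n, hp (n + 1)]
          ring
  -- degree bound
  have hdeg : h2.natDegree ≤ 2 * τ := by
    have hCX : (Polynomial.C ω * Polynomial.X).natDegree = 1 := Polynomial.natDegree_C_mul_X ω hωne
    have hc1 : (Q.comp (Polynomial.C ω * Polynomial.X)).natDegree ≤ τ := by
      rw [Polynomial.natDegree_comp, hCX, mul_one]; exact hQdeg
    have hc2 : (P.comp (Polynomial.C ω * Polynomial.X)).natDegree ≤ τ := by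
      rw [Polynomial.natDegree_comp, hCX, mul_one]; exact hPdeg
    rw [hh2]
    apply le_trans (Polynomial.natDegree_sub_le _ _)
    apply max_le
    · apply le_trans (Polynomial.natDegree_mul_le)
      omega
    · apply le_trans (Polynomial.natDegree_mul_le)
      omega
  -- the good points
  set Bad : Finset ℕ := (range N).filter (fun n => ∃ m, m < M ∧ n + 1 = e (m + 1)) with hBad
  set R : Finset ℕ := (range N).filter (fun n => ¬ ∃ m, m < M ∧ n + 1 = e (m + 1)) with hR
  have hBadcard : Bad.card ≤ M := by
    have hsub : Bad ⊆ (range M).image (fun m => e (m + 1) - 1) := by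
      intro n hn
      obtain ⟨_, m, hm, hme⟩ := mem_filter.mp hn
      exact mem_image.mpr ⟨m, mem_range.mpr hm, by omega⟩
    calc Bad.card ≤ _ := card_le_card hsub
      _ ≤ (range M).card := card_image_le
      _ = M := card_range M
  have hRcard : N - M ≤ R.card := by
    have h1 : R = range N \ Bad := by
      rw [hR, hBad, Finset.filter_not]
    have h2 : R.card = N - Bad.card := by
      rw [h1, card_sdiff_of_subset (filter_subset _ _), card_range]
    omega
  -- points in R are interior to a segment, so Y does not jump there
  have hYgood : ∀ n ∈ R, Y (n + 1) = Y n := by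
    intro n hn
    obtain ⟨hnN, hnb⟩ := mem_filter.mp hn
    obtain ⟨m, hm, h1, h2'⟩ := seg n (mem_range.mp hnN)
    have h3 : n + 1 < e (m + 1) := by
      rcases Nat.lt_or_ge (n + 1) (e (m + 1)) with h | h
      · exact h
      · exact absurd ⟨m, hm, by omega⟩ hnb
    have hXeq := hX2 m hm n h1 h3
    have hSeq := hsign m hm n (n + 1) h1 h2' (by omega) h3
    rw [hYdef]
    simp only
    rw [← hXeq, ← hSeq]
  -- h2 vanishes on the Nth roots of unity indexed by R
  have hzero : h2 = 0 := by
    by_contra hne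
    have hinj : Set.InjOn (fun n : ℕ => zet N ^ (-(n : ℤ))) R := by
      intro a ha b hb hab
      simp only at hab
      have h1 : zet N ^ (a : ℤ) = zet N ^ (b : ℤ) := by
        rw [zpow_neg, zpow_neg] at hab
        exact inv_injective hab
      rw [zpow_natCast, zpow_natCast] at h1
      exact (zet_prim N).pow_inj (mem_range.mp (mem_filter.mp ha).1)
        (mem_range.mp (mem_filter.mp hb).1) h1
    have himg : R.image (fun n : ℕ => zet N ^ (-(n : ℤ))) ⊆ h2.roots.toFinset := by
      intro x hx
      obtain ⟨n, hn, rfl⟩ := mem_image.mp hx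
      rw [Multiset.mem_toFinset, Polynomial.mem_roots hne]
      have h0 := heval n
      rw [hYgood n hn, sub_self, mul_zero] at h0
      have := mul_eq_zero.mp h0
      rcases this with h | h
      · exact absurd h (zpow_ne_zero _ (zet_ne_zero N))
      · exact h
    have hcard : R.card ≤ 2 * τ := by
      calc R.card = (R.image (fun n : ℕ => zet N ^ (-(n : ℤ)))).card :=
            (Finset.card_image_of_injOn hinj).symm
        _ ≤ h2.roots.toFinset.card := card_le_card himg
        _ ≤ Multiset.card h2.roots := Multiset.toFinset_card_le _
        _ ≤ h2.natDegree := h2.card_roots'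
        _ ≤ 2 * τ := hdeg
    omega
  -- hence Y never jumps
  have hYstep : ∀ n : ℕ, Y (n + 1) = Y n := by
    intro n
    have h0 := heval n
    rw [hzero, Polynomial.eval_zero, mul_zero] at h0
    have hF1 : ((F ((n : ℕ) : ZMod N) : ℝ) : ℂ) ≠ 0 :=
      Complex.ofReal_ne_zero.mpr (hFne _)
    have hF2 : ((F ((n + 1 : ℕ) : ZMod N) : ℝ) : ℂ) ≠ 0 :=
      Complex.ofReal_ne_zero.mpr (hFne _)
    have := mul_eq_zero.mp h0.symm
    rcases this with h | h
    · rcases mul_eq_zero.mp h with h' | h'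
      · exact absurd h' hF1
      · exact absurd h' hF2
    · exact sub_eq_zero.mp h
  have hYconst : ∀ n : ℕ, Y n = Y 0 := by
    intro n
    induction n with
    | zero => rfl
    | succ k ih => rw [hYstep k, ih]
  -- conclusion
  refine ⟨Y 0, fun j => ?_⟩
  have hjv : ((j.val : ℕ) : ZMod N) = j := ZMod.natCast_rightInverse j
  have hY : ((Real.sign (F j) : ℝ) : ℂ) * X j = Y 0 := by
    rw [← hYconst j.val, hYdef]
    simp only [hjv]
  have hsq' : ((Real.sign (F j) : ℝ) : ℂ) * ((Real.sign (F j) : ℝ) : ℂ) = 1 := by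
    rw [← Complex.ofReal_mul, hsq j, Complex.ofReal_one]
  calc X j = (((Real.sign (F j) : ℝ) : ℂ) * ((Real.sign (F j) : ℝ) : ℂ)) * X j := by
        rw [hsq', one_mul]
    _ = ((Real.sign (F j) : ℝ) : ℂ) * (((Real.sign (F j) : ℝ) : ℂ) * X j) := by ring
    _ = Y 0 * ((Real.sign (F j) : ℝ) : ℂ) := by rw [hY]; ring
end
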